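/- Let (B, L) and (B', L') be complementary Hadamard pairs with scaling factor R, let Λ(L) and Λ(L') be the sets of integers representable in base R with digits in L and in L' respectively, and for a ∈ L ⊕ L' write a = p(a) + p'(a) for the unique p(a) ∈ L and p'(a) ∈ L'. Then Λ(L) ⊕ Λ(L') = ℤ if and only if for every list of digits a₀, …, a_{r−1} ∈ L ⊕ L' of an extreme cycle for (B ⊕ B', L ⊕ L'), the list p(a₀), …, p(a_{r−1}) is the digit list of an extreme cycle for (B, L) and the list p'(a₀), …, p'(a_{r−1}) is the digit list of an extreme cycle for (B', L'). -/

import Mathlib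

open scoped Pointwise
open Matrix

/-- `m_B(x) = (1/#B) ∑_{b ∈ B} e^{2πi b x}`. -/
noncomputable def mB (B : Finset ℤ) (x : ℝ) : ℂ :=
  (B.card : ℂ)⁻¹ * ∑ b ∈ B, Complex.exp (2 * (Real.pi : ℂ) * Complex.I * (b : ℂ) * (x : ℂ))

/-- The matrix `(1/√N)(e^{2πi b l / R})_{b ∈ B, l ∈ L}` associated with `(B, L)`. -/
noncomputable def hadamardMatrix (R : ℤ) (B L : Finset ℤ) : Matrix B L ℂ :=
  fun b l => ((1 / Real.sqrt B.card : ℝ) : ℂ) *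
    Complex.exp (2 * (Real.pi : ℂ) * Complex.I * ((b : ℤ) : ℂ) * ((l : ℤ) : ℂ) / ((R : ℤ) : ℂ))

/-- `(B, L)` is a Hadamard pair with scaling factor `R`. -/
def IsHadamardPair (R : ℤ) (B L : Finset ℤ) : Prop :=
  2 ≤ R ∧ (0 : ℤ) ∈ B ∧ (0 : ℤ) ∈ L ∧ B.card = L.card ∧
    hadamardMatrix R B L * (hadamardMatrix R B L)ᴴ = 1 ∧
    (hadamardMatrix R B L)ᴴ * hadamardMatrix R B L = 1

/-- `x₀, …, x_{r-1}` is a cycle for `L` (scaling factor `R`) with digits `l₀, …, l_{r-1}`. -/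
def IsCycle (R : ℤ) (L : Finset ℤ) {r : ℕ} (x : Fin r → ℝ) (l : Fin r → ℤ) : Prop :=
  0 < r ∧ ∀ k : Fin r, l k ∈ L ∧
    (x k + (l k : ℝ)) / (R : ℝ) = x ⟨(k.val + 1) % r, Nat.mod_lt _ k.pos⟩

/-- The cycle is extreme for `(B, L)`: `|m_B(x_k)| = 1` for all `k`. -/
def IsExtremeCycle (R : ℤ) (B L : Finset ℤ) {r : ℕ} (x : Fin r → ℝ) (l : Fin r → ℤ) : Prop :=
  IsCycle R L x l ∧ ∀ k : Fin r, ‖mB B (x k)‖ = 1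

/-- All extreme cycle points for `(B, L)` are integers. -/
def ExtremeCyclesIntegral (R : ℤ) (B L : Finset ℤ) : Prop :=
  ∀ (r : ℕ) (x : Fin r → ℝ) (l : Fin r → ℤ),
    IsExtremeCycle R B L x l → ∀ k : Fin r, ∃ n : ℤ, x k = (n : ℝ)

/-- `x` is representable in base `R` with digits in `L`. -/
def Representable (R : ℤ) (L : Finset ℤ) (x : ℤ) : Prop :=
  ∃ (X : ℕ → ℤ) (l : ℕ → ℤ), X 0 = x ∧ (∀ k, l k ∈ L) ∧ ∀ k, X k = R * X (k + 1) + l k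

/-- `y` has the base-`R` representation with digit sequence `d`. -/
def RepWith (R : ℤ) (y : ℤ) (d : ℕ → ℤ) : Prop :=
  ∃ X : ℕ → ℤ, X 0 = y ∧ ∀ k, X k = R * X (k + 1) + d k

/-- `L` is a complete set of representatives modulo `R`. -/
def IsCompleteResidues (R : ℤ) (L : Finset ℤ) : Prop :=
  ∀ x : ℤ, ∃! l, l ∈ L ∧ l ≡ x [ZMOD R]

/-- `A` and `A'` have disjoint differences: `(A - A) ∩ (A' - A') = {0}`. -/
def HasDisjointDiffs (A A' : Finset ℤ) : Prop :=
  (A - A) ∩ (A' - A') = ({0} : Finset ℤ)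

/-- `(B, L)` and `(B', L')` are complementary Hadamard pairs with scaling factor `R`. -/
def IsComplementaryPair (R : ℤ) (B L B' L' : Finset ℤ) : Prop :=
  IsHadamardPair R B L ∧ IsHadamardPair R B' L' ∧
    HasDisjointDiffs B B' ∧ HasDisjointDiffs L L' ∧
    IsCompleteResidues R (B + B') ∧ IsCompleteResidues R (L + L') ∧
    ExtremeCyclesIntegral R B L ∧ ExtremeCyclesIntegral R B' L' ∧
    (B + B').gcd id = 1

/-!
Everything reduces to base-`R` expansions with digits in the complete residue system `L ⊕ L'`:
every integer has exactly one, it is eventually periodic, and up to sign its periodic part is an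
integer cycle, while the extreme cycles of `(B ⊕ B', L ⊕ L')` are integral because
`gcd (B ⊕ B') = 1`. Disjointness of differences makes a decomposition `n = λ + λ'` split the
digits of `n` as `a = p(a) + p'(a)`, so cycles for `L ⊕ L'` project to periodic expansions for
`L` and `L'`, which are cycles exactly when they close up after one period.
-/

section ExtremePoints

lemma norm_exp_two_pi_I_mul (b : ℤ) (x : ℝ) :
    ‖Complex.exp (2 * Real.pi * Complex.I * b * x)‖ = 1 := by
  rw [show 2 * (Real.pi : ℂ) * Complex.I * b * x = ((2 * Real.pi * b * x : ℝ) : ℂ) * Complex.I by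
    push_cast; ring]
  exact Complex.norm_exp_ofReal_mul_I _

lemma norm_mB_intCast {B : Finset ℤ} (hB : B.Nonempty) (n : ℤ) : ‖mB B n‖ = 1 := by
  have hterm : ∀ b ∈ B, Complex.exp (2 * Real.pi * Complex.I * b * ((n : ℝ) : ℂ)) = 1 := by
    intro b _
    rw [show 2 * (Real.pi : ℂ) * Complex.I * b * ((n : ℝ) : ℂ)
        = (b * n : ℤ) * (2 * Real.pi * Complex.I) by push_cast; ring]
    exact Complex.exp_int_mul_two_pi_mul_I _
  rw [mB, Finset.sum_congr rfl hterm, Finset.sum_const, nsmul_eq_mul, mul_one,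
    inv_mul_cancel₀ (by exact_mod_cast hB.card_pos.ne'), norm_one]

/-- `m_B(x)` is an average of unit vectors one of which is `1`; by strict convexity of `ℂ`,
it has norm `1` only if all of them equal `1`. -/
lemma exp_eq_one_of_norm_mB_eq_one {B : Finset ℤ} (h0 : 0 ∈ B) {x : ℝ} (h : ‖mB B x‖ = 1)
    {b : ℤ} (hb : b ∈ B) : Complex.exp (2 * Real.pi * Complex.I * b * x) = 1 := by
  have hN : (0 : ℝ) < B.card := by exact_mod_cast Finset.card_pos.mpr ⟨0, h0⟩
  by_contra hne
  refine (norm_sum_lt_of_strictConvexSpace (t := B) (w := fun _ => (B.card : ℝ)⁻¹) (r := 1)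
    (z := fun c : ℤ => Complex.exp (2 * Real.pi * Complex.I * c * x)) (fun _ _ => by positivity)
    ?_ hb h0 (by simpa using hne) (by positivity) (by positivity)
    fun c _ => (norm_exp_two_pi_I_mul c x).le).ne ?_
  · rw [Finset.sum_const, nsmul_eq_mul, mul_inv_cancel₀ hN.ne']
  · rw [← h, mB, Finset.mul_sum]
    simp [Complex.real_smul]

lemma exists_intCast_mul_of_exp_eq_one {b : ℤ} {x : ℝ}
    (h : Complex.exp (2 * Real.pi * Complex.I * b * x) = 1) : ∃ m : ℤ, (b : ℝ) * x = m := by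
  obtain ⟨m, hm⟩ := Complex.exp_eq_one_iff.mp h
  refine ⟨m, ?_⟩
  have : ((b * x : ℝ) : ℂ) = m := by
    apply mul_right_cancel₀ Complex.two_pi_I_ne_zero
    rw [← hm]
    push_cast
    ring
  exact_mod_cast this

lemma exists_intCast_eq_of_gcd_eq_one {B : Finset ℤ} (hB : B.gcd id = 1) {x : ℝ}
    (h : ∀ b ∈ B, ∃ m : ℤ, (b : ℝ) * x = m) : ∃ n : ℤ, x = n := by
  choose! m hm using h
  obtain ⟨g, hg⟩ := B.gcd_eq_sum_mul id
  refine ⟨∑ b ∈ B, g b * m b, ?_⟩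
  calc x = ((B.gcd id : ℤ) : ℝ) * x := by rw [hB]; simp
    _ = ∑ b ∈ B, (g b : ℝ) * ((b : ℝ) * x) := by
      rw [hg]
      push_cast
      rw [Finset.sum_mul]
      exact Finset.sum_congr rfl fun b _ => by simp only [id]; ring
    _ = _ := by
      push_cast
      exact Finset.sum_congr rfl fun b hb => by rw [hm b hb]

lemma extremeCyclesIntegral_of_gcd_eq_one (R : ℤ) {B : Finset ℤ} (L : Finset ℤ) (h0 : 0 ∈ B)
    (hB : B.gcd id = 1) : ExtremeCyclesIntegral R B L :=
  fun _ _ _ hx k => exists_intCast_eq_of_gcd_eq_one hB fun _ hb =>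
    exists_intCast_mul_of_exp_eq_one (exp_eq_one_of_norm_mB_eq_one h0 (hx.2 k) hb)

end ExtremePoints

section Expansions

variable {R : ℤ} {L C : Finset ℤ}

lemma IsCompleteResidues.expansion_unique (hC : IsCompleteResidues R C) (hR : R ≠ 0)
    {X X' d d' : ℕ → ℤ} (hd : ∀ k, d k ∈ C) (hd' : ∀ k, d' k ∈ C)
    (hX : ∀ k, X k = R * X (k + 1) + d k) (hX' : ∀ k, X' k = R * X' (k + 1) + d' k)
    (h0 : X 0 = X' 0) (k : ℕ) : X k = X' k ∧ d k = d' k := by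
  have step : ∀ k, X k = X' k → d k = d' k ∧ X (k + 1) = X' (k + 1) := by
    intro k hk
    have hdd : d k = d' k := (hC (X k)).unique
      ⟨hd k, Int.modEq_iff_dvd.mpr ⟨X (k + 1), by linarith [hX k]⟩⟩
      ⟨hd' k, Int.modEq_iff_dvd.mpr ⟨X' (k + 1), by linarith [hX' k]⟩⟩
    exact ⟨hdd, mul_left_cancel₀ hR (by linarith [hX k, hX' k])⟩
  have hXX : ∀ k, X k = X' k := fun k => Nat.rec h0 (fun k ih => (step k ih).2) k
  exact ⟨hXX k, (step k (hXX k)).1⟩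

/-- The integers with a given digit sequence differ by multiples of every power of `R`. -/
lemma RepWith.unique (hR : R.natAbs ≠ 1) {y y' : ℤ} {d : ℕ → ℤ} (h : RepWith R y d)
    (h' : RepWith R y' d) : y = y' := by
  obtain ⟨X, rfl, hX⟩ := h
  obtain ⟨X', rfl, hX'⟩ := h'
  have hpow : ∀ k, X 0 - X' 0 = R ^ k * (X k - X' k) := by
    intro k
    induction k with
    | zero => simp
    | succ k ih => rw [ih, hX k, hX' k]; ring
  by_contra hne
  obtain ⟨k, hk⟩ := Int.finiteMultiplicity_iff.mpr ⟨hR, sub_ne_zero.mpr hne⟩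
  exact hk ⟨_, hpow (k + 1)⟩

lemma representable_of_expansion {X d : ℕ → ℤ} (hd : ∀ k, d k ∈ L)
    (hX : ∀ k, X k = R * X (k + 1) + d k) (j : ℕ) : Representable R L (X j) :=
  ⟨fun k => X (j + k), fun k => d (j + k), rfl, fun _ => hd _, fun _ => hX _⟩

lemma Representable.mul_add {x l : ℤ} (hx : Representable R L x) (hl : l ∈ L) :
    Representable R L (R * x + l) := by
  obtain ⟨X, d, rfl, hd, hX⟩ := hx
  refine ⟨fun k => Nat.casesOn k (R * X 0 + l) X, fun k => Nat.casesOn k l d, rfl, ?_, ?_⟩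
  · rintro (_ | k)
    exacts [hl, hd k]
  · rintro (_ | k)
    exacts [rfl, hX k]

/-- The expansion of `n` by repeated division with remainder in `C` stays in
`[-M, M]` for `M = max |n| (∑ c ∈ C, |c|)`, hence eventually cycles. -/
lemma IsCompleteResidues.exists_expansion_eventually_periodic (hC : IsCompleteResidues R C)
    (hR : 2 ≤ R) (n : ℤ) :
    ∃ X d : ℕ → ℤ, X 0 = n ∧ (∀ k, d k ∈ C) ∧ (∀ k, X k = R * X (k + 1) + d k) ∧
      ∃ K r, 0 < r ∧ X (K + r) = X K := by
  set M := max |n| (∑ c ∈ C, |c|)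
  have step : ∀ x : ℤ, ∃ y, ∃ c ∈ C, x = R * y + c ∧ (|x| ≤ M → |y| ≤ M) := by
    intro x
    obtain ⟨c, hc, hcx⟩ := (hC x).exists
    obtain ⟨y, hy⟩ := hcx.dvd
    refine ⟨y, c, hc, by linarith, fun hx => ?_⟩
    have hcM : |c| ≤ M :=
      (Finset.single_le_sum (fun c _ => abs_nonneg c) hc).trans (le_max_right _ _)
    have hRy : |R * y| ≤ 2 * M := by rw [← hy]; linarith [abs_sub x c]
    rw [abs_mul, abs_of_pos (by omega)] at hRy
    nlinarith [abs_nonneg y]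
  choose next c hc hnext hbound using step
  set X : ℕ → ℤ := fun k => next^[k] n
  have hXsucc : ∀ k, X (k + 1) = next (X k) := fun k => Function.iterate_succ_apply' next k n
  have hXM : ∀ k, X k ∈ Set.Icc (-M) M := by
    intro k
    induction k with
    | zero => exact abs_le.mp (le_max_left _ _)
    | succ k ih => rw [Set.mem_Icc, ← abs_le, hXsucc]; exact hbound _ (abs_le.mpr ih)
  obtain ⟨i, j, hij, hXij⟩ := (Set.finite_Icc (-M) M).exists_lt_map_eq_of_forall_mem hXM
  refine ⟨X, fun k => c (X k), rfl, fun k => hc _, fun k => by rw [hXsucc]; exact hnext _,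
    i, j - i, by omega, ?_⟩
  rw [Nat.add_sub_cancel' hij.le]
  exact hXij.symm

end Expansions

section Cycles

variable {R : ℤ} {B L : Finset ℤ}

lemma isExtremeCycle_of_expansion {r : ℕ} (hr : 0 < r) (hR : R ≠ 0) (hB : B.Nonempty)
    {X d : ℕ → ℤ} (hd : ∀ k < r, d k ∈ L) (hX : ∀ k < r, X k = R * X (k + 1) + d k)
    (hper : X r = X 0) :
    IsExtremeCycle R B L (fun k : Fin r => ((-X k : ℤ) : ℝ)) (fun k => d k) := by
  refine ⟨⟨hr, fun k => ⟨hd k k.isLt, ?_⟩⟩, fun k => norm_mB_intCast hB _⟩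
  have hnext : X ((k + 1) % r) = X (k + 1) := by
    rcases (Nat.succ_le_of_lt k.isLt).lt_or_eq with hlt | heq
    · rw [Nat.mod_eq_of_lt hlt]
    · rw [show (k : ℕ) + 1 = r from heq, Nat.mod_self, hper]
  have key : (-X k : ℤ) + d k = -X ((k + 1) % r) * R := by
    rw [hnext]
    linarith [hX k k.isLt]
  rw [div_eq_iff (by exact_mod_cast hR)]
  show ((-X k : ℤ) : ℝ) + ((d k : ℤ) : ℝ) = ((-X ((k + 1) % r) : ℤ) : ℝ) * R
  exact_mod_cast key

lemma IsCycle.intCast_expansion {r : ℕ} [NeZero r] {m a : Fin r → ℤ}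
    (h : IsCycle R L (fun k => (m k : ℝ)) a) (hR : R ≠ 0) (j : ℕ) :
    a (Fin.ofNat r j) ∈ L ∧
      -m (Fin.ofNat r j) = R * -m (Fin.ofNat r (j + 1)) + a (Fin.ofNat r j) := by
  obtain ⟨hmem, hcyc⟩ := h.2 (Fin.ofNat r j)
  have hsucc : (⟨((Fin.ofNat r j : ℕ) + 1) % r, Nat.mod_lt _ (Fin.ofNat r j).pos⟩ : Fin r)
      = Fin.ofNat r (j + 1) := Fin.ext (by simp [Nat.add_mod])
  rw [hsucc, div_eq_iff (by exact_mod_cast hR)] at hcyc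
  dsimp only at hcyc
  have : m (Fin.ofNat r j) + a (Fin.ofNat r j) = m (Fin.ofNat r (j + 1)) * R := by
    exact_mod_cast hcyc
  exact ⟨hmem, by linarith⟩

end Cycles

section Complementary

variable {R : ℤ} {B L B' L' : Finset ℤ} {p p' : ℤ → ℤ}

lemma HasDisjointDiffs.proj_add (hLL' : HasDisjointDiffs L L')
    (hp : ∀ a ∈ L + L', p a ∈ L ∧ p' a ∈ L' ∧ p a + p' a = a) {u u' : ℤ} (hu : u ∈ L)
    (hu' : u' ∈ L') : p (u + u') = u ∧ p' (u + u') = u' := by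
  obtain ⟨hpL, hpL', hsum⟩ := hp _ (Finset.add_mem_add hu hu')
  have hdiff : p (u + u') - u ∈ (L - L) ∩ (L' - L') := by
    refine Finset.mem_inter.mpr ⟨Finset.sub_mem_sub hpL hu, ?_⟩
    rw [show p (u + u') - u = u' - p' (u + u') by linarith]
    exact Finset.sub_mem_sub hu' hpL'
  rw [hLL', Finset.mem_singleton, sub_eq_zero] at hdiff
  exact ⟨hdiff, by linarith⟩

lemma expansion_split (hR : R ≠ 0) (hC : IsCompleteResidues R (L + L'))
    (hLL' : HasDisjointDiffs L L') (hp : ∀ a ∈ L + L', p a ∈ L ∧ p' a ∈ L' ∧ p a + p' a = a)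
    {X d : ℕ → ℤ} (hd : ∀ k, d k ∈ L + L') (hX : ∀ k, X k = R * X (k + 1) + d k) {y y' : ℤ}
    (hy : Representable R L y) (hy' : Representable R L' y') (hsum : y + y' = X 0) :
    ∃ Y Y' : ℕ → ℤ, Y 0 = y ∧ Y' 0 = y' ∧ ∀ k, Y k + Y' k = X k ∧
      Y k = R * Y (k + 1) + p (d k) ∧ Y' k = R * Y' (k + 1) + p' (d k) := by
  obtain ⟨Y, u, rfl, hu, hY⟩ := hy
  obtain ⟨Y', u', rfl, hu', hY'⟩ := hy'
  have hunique := hC.expansion_unique hR (X := fun k => Y k + Y' k)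
    (fun k => Finset.add_mem_add (hu k) (hu' k)) hd (fun k => by linarith [hY k, hY' k]) hX hsum
  refine ⟨Y, Y', rfl, rfl, fun k => ?_⟩
  obtain ⟨hYX, hud⟩ := hunique k
  obtain ⟨hpu, hpu'⟩ := hLL'.proj_add hp (hu k) (hu' k)
  rw [← hud, hpu, hpu']
  exact ⟨hYX, hY k, hY' k⟩

lemma eq_of_representable_add_eq (hR : 2 ≤ R) (hC : IsCompleteResidues R (L + L'))
    (hLL' : HasDisjointDiffs L L') (hp : ∀ a ∈ L + L', p a ∈ L ∧ p' a ∈ L' ∧ p a + p' a = a)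
    {y y' z z' : ℤ} (hy : Representable R L y) (hy' : Representable R L' y')
    (hz : Representable R L z) (hz' : Representable R L' z') (h : y + y' = z + z') :
    y = z ∧ y' = z' := by
  obtain ⟨X, u, rfl, hu, hX⟩ := hy
  obtain ⟨X', u', rfl, hu', hX'⟩ := hy'
  obtain ⟨Y, Y', rfl, rfl, hYY'⟩ := expansion_split (by omega) hC hLL' hp
    (X := fun k => X k + X' k) (fun k => Finset.add_mem_add (hu k) (hu' k))
    (fun k => by linarith [hX k, hX' k]) hz hz' h.symm
  have hXY : X 0 = Y 0 := RepWith.unique (by omega) ⟨X, rfl, hX⟩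
    ⟨Y, rfl, fun k => by rw [(hYY' k).2.1, (hLL'.proj_add hp (hu k) (hu' k)).1]⟩
  exact ⟨hXY, by linarith⟩

lemma existsUnique_decomposition_iff (hR : 2 ≤ R) (hC : IsCompleteResidues R (L + L'))
    (hLL' : HasDisjointDiffs L L') (hp : ∀ a ∈ L + L', p a ∈ L ∧ p' a ∈ L' ∧ p a + p' a = a)
    (n : ℤ) :
    (∃! q : ℤ × ℤ, Representable R L q.1 ∧ Representable R L' q.2 ∧ q.1 + q.2 = n) ↔
      n ∈ {y | Representable R L y} + {y | Representable R L' y} := by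
  refine ⟨fun ⟨⟨y, y'⟩, ⟨hy, hy', hsum⟩, _⟩ => ⟨y, hy, y', hy', hsum⟩,
    fun ⟨y, hy, y', hy', hsum⟩ => ⟨(y, y'), ⟨hy, hy', hsum⟩, fun q hq => ?_⟩⟩
  obtain ⟨h1, h2⟩ := eq_of_representable_add_eq hR hC hLL' hp hq.1 hq.2.1 hy hy'
    (hq.2.2.trans hsum.symm)
  exact Prod.ext h1 h2

lemma mul_add_mem_representable_add {y c : ℤ}
    (hp : ∀ a ∈ L + L', p a ∈ L ∧ p' a ∈ L' ∧ p a + p' a = a) (hc : c ∈ L + L')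
    (hy : y ∈ {y | Representable R L y} + {y | Representable R L' y}) :
    R * y + c ∈ {y | Representable R L y} + {y | Representable R L' y} := by
  obtain ⟨z, hz, z', hz', rfl⟩ := hy
  obtain ⟨hpc, hpc', hsum⟩ := hp c hc
  exact ⟨R * z + p c, Representable.mul_add hz hpc, R * z' + p' c,
    Representable.mul_add hz' hpc', by linarith⟩

/-- After one period, the split expansions of the integral cycle point `-x 0` reach another
decomposition of `-x 0`, which by uniqueness is the one they started from. -/
lemma exists_isExtremeCycle_proj (hR : 2 ≤ R) (hC : IsCompleteResidues R (L + L'))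
    (hLL' : HasDisjointDiffs L L') (hp : ∀ a ∈ L + L', p a ∈ L ∧ p' a ∈ L' ∧ p a + p' a = a)
    (hB : B.Nonempty) (hB' : B'.Nonempty) (hint : ExtremeCyclesIntegral R (B + B') (L + L'))
    (hcover : ∀ n, n ∈ {y | Representable R L y} + {y | Representable R L' y})
    {r : ℕ} {x : Fin r → ℝ} {a : Fin r → ℤ} (hx : IsExtremeCycle R (B + B') (L + L') x a) :
    (∃ y : Fin r → ℝ, IsExtremeCycle R B L y (fun k => p (a k))) ∧
      (∃ y : Fin r → ℝ, IsExtremeCycle R B' L' y (fun k => p' (a k))) := by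
  have hR0 : R ≠ 0 := by omega
  choose m hm using hint r x a hx
  obtain rfl : x = fun k => (m k : ℝ) := funext hm
  have hr := hx.1.1
  have : NeZero r := ⟨hr.ne'⟩
  have hexp := hx.1.intCast_expansion hR0
  obtain ⟨y, hy, y', hy', hsum⟩ := hcover (-m (Fin.ofNat r 0))
  obtain ⟨Y, Y', rfl, rfl, hYY'⟩ := expansion_split hR0 hC hLL' hp
    (fun j => (hexp j).1) (fun j => (hexp j).2) hy hy' hsum
  have hper := eq_of_representable_add_eq hR hC hLL' hp
    (representable_of_expansion (fun k => (hp _ (hexp k).1).1) (fun k => (hYY' k).2.1) r)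
    (representable_of_expansion (fun k => (hp _ (hexp k).1).2.1) (fun k => (hYY' k).2.2) r)
    hy hy' (by rw [(hYY' r).1, (hYY' 0).1]; simp)
  refine ⟨⟨fun k => ((-Y k : ℤ) : ℝ), ?_⟩, ⟨fun k => ((-Y' k : ℤ) : ℝ), ?_⟩⟩
  · simpa using isExtremeCycle_of_expansion hr hR0 hB (fun k _ => (hp _ (hexp k).1).1)
      (fun k _ => (hYY' k).2.1) hper.1
  · simpa using isExtremeCycle_of_expansion hr hR0 hB' (fun k _ => (hp _ (hexp k).1).2.1)
      (fun k _ => (hYY' k).2.2) hper.2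

/-- The projected cycles of the periodic part of the expansion of `n` add up to it, so that part
lies in `Λ(L) + Λ(L')`; the digits before it are split through `p, p'`. -/
lemma mem_add_of_exists_isExtremeCycle_proj (hR : 2 ≤ R) (hC : IsCompleteResidues R (L + L'))
    (hp : ∀ a ∈ L + L', p a ∈ L ∧ p' a ∈ L' ∧ p a + p' a = a) (hB : (B + B').Nonempty)
    (hint : ExtremeCyclesIntegral R B L) (hint' : ExtremeCyclesIntegral R B' L')
    (hproj : ∀ (r : ℕ) (x : Fin r → ℝ) (a : Fin r → ℤ),
      IsExtremeCycle R (B + B') (L + L') x a →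
      (∃ y : Fin r → ℝ, IsExtremeCycle R B L y (fun k => p (a k))) ∧
      (∃ y : Fin r → ℝ, IsExtremeCycle R B' L' y (fun k => p' (a k))))
    (n : ℤ) : n ∈ {y | Representable R L y} + {y | Representable R L' y} := by
  have hR0 : R ≠ 0 := by omega
  obtain ⟨X, d, rfl, hd, hX, K, r, hr, hKr⟩ := hC.exists_expansion_eventually_periodic hR n
  have : NeZero r := ⟨hr.ne'⟩
  have hcyc := isExtremeCycle_of_expansion hr hR0 hB (X := fun j => X (K + j))
    (d := fun j => d (K + j)) (fun _ _ => hd _) (fun _ _ => hX _) hKr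
  obtain ⟨⟨y, hy⟩, ⟨y', hy'⟩⟩ := hproj r _ _ hcyc
  choose z hz using hint r y _ hy
  obtain rfl : y = fun k => (z k : ℝ) := funext hz
  choose z' hz' using hint' r y' _ hy'
  obtain rfl : y' = fun k => (z' k : ℝ) := funext hz'
  have hzexp := hy.1.intCast_expansion hR0
  have hz'exp := hy'.1.intCast_expansion hR0
  have hXexp := hcyc.1.intCast_expansion hR0
  have hK : -z (Fin.ofNat r 0) + -z' (Fin.ofNat r 0) = X K := by
    refine (RepWith.unique (by omega)
      ⟨fun j => -z (Fin.ofNat r j) + -z' (Fin.ofNat r j), rfl, fun j => ?_⟩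
      ⟨fun j => -(-X (K + Fin.ofNat r j)), rfl, fun j => (hXexp j).2⟩).trans (by simp)
    linarith [(hzexp j).2, (hz'exp j).2, (hp _ (hXexp j).1).2.2]
  have hXK : X K ∈ {y | Representable R L y} + {y | Representable R L' y} :=
    ⟨_, representable_of_expansion (fun j => (hzexp j).1) (fun j => (hzexp j).2) 0,
      _, representable_of_expansion (fun j => (hz'exp j).1) (fun j => (hz'exp j).2) 0, hK⟩
  have hback : ∀ k, X k ∈ {y | Representable R L y} + {y | Representable R L' y} →
      X 0 ∈ {y | Representable R L y} + {y | Representable R L' y} := by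
    intro k
    induction k with
    | zero => exact id
    | succ k ih =>
      exact fun hk => ih (by rw [hX k]; exact mul_add_mem_representable_add hp (hd k) hk)
  exact hback K hXK

end Complementary

/-- For complementary Hadamard pairs `(B, L)` and `(B', L')`, with `p, p'`
the projections of `L ⊕ L'` onto `L` and `L'`, one has `Λ(L) ⊕ Λ(L') = ℤ` (every integer is
uniquely a sum `λ + λ'` with `λ ∈ Λ(L)`, `λ' ∈ Λ(L')`) if and only if for every digit list
`a₀, …, a_{r-1}` of an extreme cycle for `(B ⊕ B', L ⊕ L')`, the lists `p(a₀), …, p(a_{r-1})`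
and `p'(a₀), …, p'(a_{r-1})` are digit lists of extreme cycles for `(B, L)` and `(B', L')`
respectively. -/
theorem spectra_tile_iff_cycles_project (R : ℤ) (B L B' L' : Finset ℤ)
    (h : IsComplementaryPair R B L B' L') (p p' : ℤ → ℤ)
    (hp : ∀ a ∈ L + L', p a ∈ L ∧ p' a ∈ L' ∧ p a + p' a = a) :
    (∀ n : ℤ, ∃! q : ℤ × ℤ,
        Representable R L q.1 ∧ Representable R L' q.2 ∧ q.1 + q.2 = n) ↔
    (∀ (r : ℕ) (x : Fin r → ℝ) (a : Fin r → ℤ),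
      IsExtremeCycle R (B + B') (L + L') x a →
      (∃ y : Fin r → ℝ, IsExtremeCycle R B L y (fun k => p (a k))) ∧
      (∃ y : Fin r → ℝ, IsExtremeCycle R B' L' y (fun k => p' (a k)))) := by
  obtain ⟨⟨hR, hB0, -⟩, ⟨-, hB'0, -⟩, -, hLL', -, hC, hint, hint', hgcd⟩ := h
  have hBB' : (0 : ℤ) ∈ B + B' := by simpa using Finset.add_mem_add hB0 hB'0
  simp only [existsUnique_decomposition_iff hR hC hLL' hp]
  exact ⟨fun hcover _ _ _ hx => exists_isExtremeCycle_proj hR hC hLL' hp ⟨0, hB0⟩ ⟨0, hB'0⟩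
      (extremeCyclesIntegral_of_gcd_eq_one R _ hBB' hgcd) hcover hx,
    mem_add_of_exists_isExtremeCycle_proj hR hC hp ⟨0, hBB'⟩ hint hint'⟩
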